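/- For every λ ≥ 0, every h with 0 ≤ h ≤ λ and every N ≥ 1, the annealed partition function satisfies the two-sided bound K(N)·(1 + exp(2λ(λ − h)N))/2 ≤ 𝔼 Z_{N,ω}(λ,h) ≤ u(N)·exp(2λ(λ − h)N). -/

import Mathlib

open MeasureTheory ProbabilityTheory Filter Finset

/-- The Boltzmann weight `(1 + exp(-2λh(b-a) - 2λ Σ_{i=a+1}^b ω_i))/2`
of a single copolymer excursion from `a` to `b`. -/
noncomputable def cw (lam h : ℝ) (ω : ℕ → ℝ) (a b : ℕ) : ℝ :=
  (1 + Real.exp (-(2 * lam * h * ((b : ℝ) - (a : ℝ)))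
      - 2 * lam * ∑ i ∈ Finset.Icc (a + 1) b, ω i)) / 2

/-- The copolymer partition function `Z_{N,ω}(λ,h)`: summing over the position `j`
of the last renewal point before `N` reproduces the sum over all renewal
configurations `0 = t_0 < t_1 < ⋯ < t_m = N` of `∏_r K(t_r - t_{r-1}) ·
(1+exp(-2λh(t_r-t_{r-1}) - 2λ Σ ω_i))/2`. -/
noncomputable def Zpart (K : ℕ → ℝ) (lam h : ℝ) (ω : ℕ → ℝ) : ℕ → ℝ
  | 0 => 1
  | N + 1 => ∑ j ∈ (Finset.range (N + 1)).attach,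
      Zpart K lam h ω j.1 * K (N + 1 - j.1) * cw lam h ω j.1 (N + 1)
  decreasing_by exact Finset.mem_range.mp j.2

/-- `P` is the joint law of an IID sequence of standard Gaussian random variables:
a probability measure on `ℕ → ℝ` under which the coordinates are independent,
each with law `gaussianReal 0 1`. -/
def IsGaussianDisorder (P : Measure (ℕ → ℝ)) : Prop :=
  IsProbabilityMeasure P ∧
    iIndepFun (fun i (ω : ℕ → ℝ) => ω i) P ∧
    ∀ i : ℕ, P.map (fun ω => ω i) = gaussianReal 0 1

/-- The renewal mass function `u(N) = P(N ∈ τ)`: `u(0) = 1` and, summing over the last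
renewal point `j < N`, `u(N) = Σ_j u(j) K(N-j)`, which reproduces the sum over all
renewal configurations `0 = t_0 < ⋯ < t_m = N` of `∏_r K(t_r - t_{r-1})`. -/
noncomputable def uRen (K : ℕ → ℝ) : ℕ → ℝ
  | 0 => 1
  | N + 1 => ∑ j ∈ (Finset.range (N + 1)).attach, uRen K j.1 * K (N + 1 - j.1)
  decreasing_by exact Finset.mem_range.mp j.2


/-!
Summing over the last renewal point, `Z_N = Σ_{j<N} Z_j K(N-j) w_j(N)` where the excursion
weight `w_j(N)` only involves the disorder on `(j, N]`, so it is independent of `Z_j`.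
Taking expectations, `𝔼 Z_N` is the same renewal sum with the annealed excursion weights
`K(ℓ)(1 + e^{2λ(λ-h)ℓ})/2`, computed from the Gaussian moment generating function.
Keeping the single excursion `0 → N` gives the lower bound. For the upper bound,
`(1 + e^x)/2 ≤ e^x` for `x ≥ 0`, and the factors `e^{2λ(λ-h)ℓ}` multiply to `e^{2λ(λ-h)N}`
along every renewal configuration, leaving `u(N)`.
-/

open Filtration

/-- `renewalSum w N` is the sum over all `0 = t_0 < ⋯ < t_m = N` of `∏_r w t_{r-1} t_r`. -/
noncomputable def renewalSum (w : ℕ → ℕ → ℝ) : ℕ → ℝ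
  | 0 => 1
  | N + 1 => ∑ j ∈ (Finset.range (N + 1)).attach, renewalSum w j.1 * w j.1 (N + 1)
  decreasing_by exact Finset.mem_range.mp j.2

section renewalSum

variable {w w' : ℕ → ℕ → ℝ}

@[simp]
lemma renewalSum_zero (w : ℕ → ℕ → ℝ) : renewalSum w 0 = 1 := by
  rw [renewalSum]

lemma renewalSum_succ (w : ℕ → ℕ → ℝ) (N : ℕ) :
    renewalSum w (N + 1) = ∑ j ∈ range (N + 1), renewalSum w j * w j (N + 1) := by
  rw [renewalSum]
  exact sum_attach (range (N + 1)) fun j => renewalSum w j * w j (N + 1)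

lemma renewalSum_congr (h : ∀ a b, a < b → w a b = w' a b) (N : ℕ) :
    renewalSum w N = renewalSum w' N := by
  induction N using Nat.strong_induction_on with
  | _ N ih =>
    rcases N with _ | N
    · simp
    · rw [renewalSum_succ, renewalSum_succ]
      refine sum_congr rfl fun j hj => ?_
      rw [ih j (mem_range.mp hj), h j (N + 1) (mem_range.mp hj)]

lemma renewalSum_nonneg (hw : ∀ a b, a < b → 0 ≤ w a b) (N : ℕ) : 0 ≤ renewalSum w N := by
  induction N using Nat.strong_induction_on with
  | _ N ih =>
    rcases N with _ | N
    · simp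
    · rw [renewalSum_succ]
      exact sum_nonneg fun j hj =>
        mul_nonneg (ih j (mem_range.mp hj)) (hw j (N + 1) (mem_range.mp hj))

lemma renewalSum_mono (hw : ∀ a b, a < b → 0 ≤ w a b)
    (hww' : ∀ a b, a < b → w a b ≤ w' a b) (N : ℕ) :
    renewalSum w N ≤ renewalSum w' N := by
  induction N using Nat.strong_induction_on with
  | _ N ih =>
    rcases N with _ | N
    · simp
    · rw [renewalSum_succ, renewalSum_succ]
      refine sum_le_sum fun j hj => ?_
      have hj : j < N + 1 := mem_range.mp hj
      exact mul_le_mul (ih j hj) (hww' j (N + 1) hj) (hw j (N + 1) hj)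
        ((renewalSum_nonneg hw j).trans (ih j hj))

lemma weight_zero_le_renewalSum (hw : ∀ a b, a < b → 0 ≤ w a b) {N : ℕ} (hN : 0 < N) :
    w 0 N ≤ renewalSum w N := by
  obtain ⟨M, rfl⟩ := Nat.exists_eq_add_of_lt hN
  rw [zero_add, renewalSum_succ]
  calc w 0 (M + 1) = renewalSum w 0 * w 0 (M + 1) := by simp
    _ ≤ _ := single_le_sum
        (fun j hj => mul_nonneg (renewalSum_nonneg hw j) (hw j (M + 1) (mem_range.mp hj)))
        (mem_range.mpr M.succ_pos)

lemma renewalSum_mul_exp (w : ℕ → ℕ → ℝ) (c : ℝ) (N : ℕ) :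
    renewalSum (fun a b => w a b * Real.exp (c * ((b : ℝ) - a))) N
      = renewalSum w N * Real.exp (c * N) := by
  induction N using Nat.strong_induction_on with
  | _ N ih =>
    rcases N with _ | N
    · simp
    · rw [renewalSum_succ, renewalSum_succ, sum_mul]
      refine sum_congr rfl fun j hj => ?_
      rw [ih j (mem_range.mp hj)]
      have hexp : Real.exp (c * j) * Real.exp (c * (((N + 1 : ℕ) : ℝ) - j))
          = Real.exp (c * (N + 1 : ℕ)) := by
        rw [← Real.exp_add]; ring_nf
      rw [← hexp]; ring

lemma measurable_renewalSum {Ω : Type*} {m : MeasurableSpace Ω} {W : ℕ → ℕ → Ω → ℝ}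
    {N : ℕ} (hW : ∀ a b, a < b → b ≤ N → Measurable (W a b)) :
    Measurable fun ω => renewalSum (fun a b => W a b ω) N := by
  induction N using Nat.strong_induction_on with
  | _ N ih =>
    rcases N with _ | N
    · simp only [renewalSum_zero]; exact measurable_const
    · simp only [renewalSum_succ]
      refine Finset.measurable_sum _ fun j hj => ?_
      have hj : j < N + 1 := mem_range.mp hj
      exact (ih j hj fun a b hab hbj => hW a b hab (hbj.trans hj.le)).mul
        (hW j (N + 1) hj le_rfl)

end renewalSum

lemma uRen_eq_renewalSum (K : ℕ → ℝ) (N : ℕ) :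
    uRen K N = renewalSum (fun a b => K (b - a)) N := by
  induction N using Nat.strong_induction_on with
  | _ N ih =>
    rcases N with _ | N
    · simp [uRen]
    · rw [uRen, sum_attach (range (N + 1)) fun j => uRen K j * K (N + 1 - j), renewalSum_succ]
      exact sum_congr rfl fun j hj => by rw [ih j (mem_range.mp hj)]

lemma Zpart_eq_renewalSum (K : ℕ → ℝ) (lam h : ℝ) (ω : ℕ → ℝ) (N : ℕ) :
    Zpart K lam h ω N = renewalSum (fun a b => K (b - a) * cw lam h ω a b) N := by
  induction N using Nat.strong_induction_on with
  | _ N ih =>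
    rcases N with _ | N
    · simp [Zpart]
    · rw [Zpart, sum_attach (range (N + 1))
        fun j => Zpart K lam h ω j * K (N + 1 - j) * cw lam h ω j (N + 1), renewalSum_succ]
      exact sum_congr rfl fun j hj => by rw [ih j (mem_range.mp hj), mul_assoc]

section Independence

variable {ι β : Type*} [MeasurableSpace β]

lemma measurable_piFinset_apply {S : Finset ι} {i : ι} (hi : i ∈ S) :
    Measurable[piFinset S] fun ω : ι → β => ω i :=
  (measurable_pi_apply (⟨i, hi⟩ : S)).comp (comap_measurable S.restrict)

lemma indepFun_of_measurable_piFinset {γ γ' : Type*} [MeasurableSpace γ] [MeasurableSpace γ']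
    {P : Measure (ι → β)} (hP : iIndepFun (fun i (ω : ι → β) => ω i) P)
    {S T : Finset ι} (hST : Disjoint S T) {f : (ι → β) → γ} {g : (ι → β) → γ'}
    (hf : Measurable[piFinset S] f) (hg : Measurable[piFinset T] g) : IndepFun f g P := by
  have hblocks := hP.indepFun_finset S T hST fun i => measurable_pi_apply i
  rw [IndepFun_iff_Indep] at hblocks ⊢
  exact indep_of_indep_of_le_right (indep_of_indep_of_le_left hblocks hf.comap_le) hg.comap_le

lemma integral_renewalSum {P : Measure (ℕ → β)}
    (hP : iIndepFun (fun i (ω : ℕ → β) => ω i) P) {W : ℕ → ℕ → (ℕ → β) → ℝ}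
    (hWm : ∀ a b, Measurable[piFinset (Ioc a b)] (W a b))
    (hWi : ∀ a b, Integrable (W a b) P) (N : ℕ) :
    Integrable (fun ω => renewalSum (fun a b => W a b ω) N) P ∧
      ∫ ω, renewalSum (fun a b => W a b ω) N ∂P
        = renewalSum (fun a b => ∫ ω, W a b ω ∂P) N := by
  have := hP.isProbabilityMeasure
  have hRm (j : ℕ) :
      Measurable[piFinset (Ioc 0 j)] fun ω => renewalSum (fun a b => W a b ω) j :=
    measurable_renewalSum fun a b _ hbj =>
      (hWm a b).mono (piFinset.mono (Ioc_subset_Ioc a.zero_le hbj)) le_rfl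
  induction N using Nat.strong_induction_on with
  | _ N ih =>
    rcases N with _ | N
    · simp
    · have hindep (j : ℕ) : IndepFun (fun ω => renewalSum (fun a b => W a b ω) j)
          (W j (N + 1)) P :=
        indepFun_of_measurable_piFinset hP (Ioc_disjoint_Ioc_of_le le_rfl) (hRm j)
          (hWm j (N + 1))
      have hint : ∀ j ∈ range (N + 1),
          Integrable (fun ω => renewalSum (fun a b => W a b ω) j * W j (N + 1) ω) P :=
        fun j hj => (hindep j).integrable_mul (ih j (mem_range.mp hj)).1 (hWi j (N + 1))
      simp only [renewalSum_succ]
      refine ⟨integrable_finsetSum _ hint, ?_⟩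
      rw [integral_finsetSum _ hint]
      refine sum_congr rfl fun j hj => ?_
      obtain ⟨hRi, hRint⟩ := ih j (mem_range.mp hj)
      rw [← hRint]
      exact (hindep j).integral_mul_eq_mul_integral hRi.aestronglyMeasurable
        (hWi j (N + 1)).aestronglyMeasurable

end Independence

lemma mgf_sum_of_stdGaussian {ι Ω : Type*} {mΩ : MeasurableSpace Ω} {μ : Measure Ω}
    {X : ι → Ω → ℝ} (hX : iIndepFun X μ) (hXlaw : ∀ i, μ.map (X i) = gaussianReal 0 1)
    (s : Finset ι) (t : ℝ) : mgf (∑ i ∈ s, X i) μ t = Real.exp (#s * (t ^ 2 / 2)) := by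
  have := hX.isProbabilityMeasure
  rw [hX.mgf_sum₀ (fun i => aemeasurable_of_map_neZero (by rw [hXlaw i]; infer_instance)) s]
  simp [mgf_gaussianReal (hXlaw _), ← Real.exp_nat_mul]

noncomputable def annealedCw (lam h ℓ : ℝ) : ℝ :=
  (1 + Real.exp (2 * lam * (lam - h) * ℓ)) / 2

lemma annealedCw_le_exp {lam h ℓ : ℝ} (hc : 0 ≤ 2 * lam * (lam - h)) (hℓ : 0 ≤ ℓ) :
    annealedCw lam h ℓ ≤ Real.exp (2 * lam * (lam - h) * ℓ) := by
  have := Real.one_le_exp (mul_nonneg hc hℓ)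
  rw [annealedCw]
  linarith

section GaussianDisorder

variable {P : Measure (ℕ → ℝ)}

lemma mgf_sum_coord (hP : IsGaussianDisorder P) (s : Finset ℕ) (t : ℝ) :
    mgf (fun ω => ∑ i ∈ s, ω i) P t = Real.exp (#s * (t ^ 2 / 2)) := by
  rw [← sum_fn]
  exact mgf_sum_of_stdGaussian hP.2.1 hP.2.2 s t

lemma integrable_exp_mul_sum_coord (hP : IsGaussianDisorder P) (s : Finset ℕ) (t : ℝ) :
    Integrable (fun ω => Real.exp (t * ∑ i ∈ s, ω i)) P := by
  have := hP.1
  exact mgf_pos_iff.mp (by rw [mgf_sum_coord hP]; positivity)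

lemma cw_eq (lam h : ℝ) (ω : ℕ → ℝ) (a b : ℕ) :
    cw lam h ω a b = (1 + Real.exp (-(2 * lam * h * ((b : ℝ) - a)))
      * Real.exp (-(2 * lam) * ∑ i ∈ Icc (a + 1) b, ω i)) / 2 := by
  rw [cw, ← Real.exp_add]
  ring_nf

lemma measurable_cw (lam h : ℝ) (a b : ℕ) :
    Measurable[piFinset (Ioc a b)] fun ω => cw lam h ω a b := by
  have hcoord :
      ∀ i ∈ Icc (a + 1) b, Measurable[piFinset (Ioc a b)] fun ω : ℕ → ℝ => ω i :=
    fun i hi => measurable_piFinset_apply (by simp only [mem_Icc, mem_Ioc] at hi ⊢; omega)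
  exact ((measurable_const.sub ((Finset.measurable_sum _ hcoord).const_mul _)).exp.const_add
    1).div_const 2

lemma integrable_cw (hP : IsGaussianDisorder P) (lam h : ℝ) (a b : ℕ) :
    Integrable (fun ω => cw lam h ω a b) P := by
  have := hP.1
  simp only [cw_eq]
  exact ((integrable_const 1).add
    ((integrable_exp_mul_sum_coord hP _ _).const_mul _)).div_const 2

lemma integral_cw (hP : IsGaussianDisorder P) (lam h : ℝ) {a b : ℕ} (hab : a ≤ b) :
    ∫ ω, cw lam h ω a b ∂P = annealedCw lam h ((b : ℝ) - a) := by
  have := hP.1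
  simp only [cw_eq]
  rw [integral_div, integral_add (integrable_const 1)
    ((integrable_exp_mul_sum_coord hP _ _).const_mul _), integral_const_mul]
  have hsum := mgf_sum_coord hP (Icc (a + 1) b) (-(2 * lam))
  rw [mgf] at hsum
  rw [hsum, Nat.card_Icc, Nat.add_sub_add_right, Nat.cast_sub hab, ← Real.exp_add]
  simp only [integral_const, probReal_univ, smul_eq_mul, one_mul, annealedCw]
  ring_nf

lemma integral_Zpart (hP : IsGaussianDisorder P) (K : ℕ → ℝ) (lam h : ℝ) (N : ℕ) :
    ∫ ω, Zpart K lam h ω N ∂P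
      = renewalSum (fun a b => K (b - a) * annealedCw lam h ((b : ℝ) - a)) N := by
  simp_rw [Zpart_eq_renewalSum]
  rw [(integral_renewalSum hP.2.1 (fun a b => (measurable_cw lam h a b).const_mul _)
    (fun a b => (integrable_cw hP lam h a b).const_mul _) N).2]
  exact renewalSum_congr
    (fun a b hab => by rw [integral_const_mul, integral_cw hP lam h hab.le]) N

end GaussianDisorder

theorem annealed_two_sided_bound_general
    (K : ℕ → ℝ) (hKnn : ∀ n, 0 ≤ K n)
    (P : Measure (ℕ → ℝ)) (hP : IsGaussianDisorder P)
    (lam h : ℝ) (hlam : 0 ≤ lam) (hhlam : h ≤ lam) (N : ℕ) (hN : 1 ≤ N) :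
    K N * ((1 + Real.exp (2 * lam * (lam - h) * N)) / 2) ≤ ∫ ω, Zpart K lam h ω N ∂P ∧
      ∫ ω, Zpart K lam h ω N ∂P ≤ uRen K N * Real.exp (2 * lam * (lam - h) * N) := by
  have hc : 0 ≤ 2 * lam * (lam - h) := mul_nonneg (by linarith) (by linarith)
  have hweight_nonneg : ∀ a b, a < b → 0 ≤ K (b - a) * annealedCw lam h ((b : ℝ) - a) :=
    fun a b _ => mul_nonneg (hKnn _) (by rw [annealedCw]; positivity)
  rw [integral_Zpart hP]
  constructor
  · simpa [annealedCw] using weight_zero_le_renewalSum hweight_nonneg hN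
  · calc _ ≤ renewalSum
            (fun a b => K (b - a) * Real.exp (2 * lam * (lam - h) * ((b : ℝ) - a))) N :=
          renewalSum_mono hweight_nonneg (fun a b hab => mul_le_mul_of_nonneg_left
            (annealedCw_le_exp hc (sub_nonneg.mpr (Nat.cast_le.mpr hab.le))) (hKnn _)) N
      _ = uRen K N * Real.exp (2 * lam * (lam - h) * N) := by
          rw [renewalSum_mul_exp, uRen_eq_renewalSum]

/-- for `λ ≥ 0`, `0 ≤ h ≤ λ` and `N ≥ 1`,
`K(N)(1+exp(2λ(λ-h)N))/2 ≤ 𝔼 Z_{N,ω}(λ,h) ≤ u(N) exp(2λ(λ-h)N)`. -/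
theorem annealed_two_sided_bound
    (K : ℕ → ℝ) (hK0 : K 0 = 0) (hKnn : ∀ n, 0 ≤ K n) (hKsum : HasSum K 1)
    (P : Measure (ℕ → ℝ)) (hP : IsGaussianDisorder P)
    (lam h : ℝ) (hlam : 0 ≤ lam) (hh : 0 ≤ h) (hhlam : h ≤ lam) (N : ℕ) (hN : 1 ≤ N) :
    K N * ((1 + Real.exp (2 * lam * (lam - h) * N)) / 2) ≤ ∫ ω, Zpart K lam h ω N ∂P ∧
      ∫ ω, Zpart K lam h ω N ∂P ≤ uRen K N * Real.exp (2 * lam * (lam - h) * N) :=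
  annealed_two_sided_bound_general K hKnn P hP lam h hlam hhlam N hN
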